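/- Let K be a number field of degree d and fix integers m ≥ k ≥ 1. There exists a constant C > 0, independent of Λ, such that for every O_K-module lattice Λ ⊆ K_ℝ^m of O_K-rank k with successive K-minima l₁, …, l_k, the covering radius satisfies ρ(Λ) ≤ C·‖l_k‖. -/

import Mathlib

noncomputable section
open NumberField NumberField.InfinitePlace MeasureTheory Module Submodule Matrix
attribute [local instance] Classical.propDecidable
set_option synthInstance.maxHeartbeats 1000000
set_option maxHeartbeats 1000000

/-! Setup: the space `K_ℝ = K ⊗ ℝ`, realized as the mixed space `ℝ^{r₁} × ℂ^{r₂}`, together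
with the Euclidean structure given by `‖x‖² = |Δ_K|^{-2/d}·Tr(x·x̄)`, extended coordinatewise
to vectors and matrices over `K_ℝ`. This Euclidean structure is realized through explicit
linear coordinates with values in `EuclideanSpace ℝ _`. -/

namespace Paper

variable (K : Type) [Field K] [NumberField K]

/-- The mixed space `K ⊗ ℝ ≅ ℝ^{r₁} × ℂ^{r₂}`. -/
abbrev MS : Type := NumberField.mixedEmbedding.mixedSpace K

/-- Real-coordinate index type for `K_ℝ`: one coordinate for each real place and two for each
complex place. -/
abbrev RIx : Type := {w : InfinitePlace K // IsReal w} ⊕ ({w : InfinitePlace K // IsComplex w} × Bool)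

/-- The scaling factor `|Δ_K|^{-1/d}`. -/
def sK : ℝ := (Int.natAbs (NumberField.discr K) : ℝ) ^ (-(1:ℝ) / (finrank ℚ K))

lemma sK_pos : 0 < sK K := by
  apply Real.rpow_pos_of_pos
  have := NumberField.discr_ne_zero K
  exact_mod_cast Int.natAbs_pos.mpr this

/-- Coordinates of `K_ℝ` realizing the Euclidean structure `‖x‖² = |Δ_K|^{-2/d}·Tr(x·x̄)`:
a real place `v` contributes the coordinate `|Δ_K|^{-1/d}·x_v` and a complex place `w`
contributes the two coordinates `|Δ_K|^{-1/d}·√2·Re(x_w)` and `|Δ_K|^{-1/d}·√2·Im(x_w)`,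
so that the standard Euclidean norm of the coordinates equals the norm above. -/
def eucMap : MS K ≃ₗ[ℝ] EuclideanSpace ℝ (RIx K) where
  toFun x := WithLp.toLp 2 fun (q : RIx K) => (Sum.rec (fun v => sK K * x.1 v)
    (fun p => (sK K * Real.sqrt 2) * (if p.2 then (x.2 p.1).im else (x.2 p.1).re)) q : ℝ)
  invFun y := (fun v => (sK K)⁻¹ * y (.inl v),
               fun w => ⟨(sK K * Real.sqrt 2)⁻¹ * y (.inr (w, false)),
                         (sK K * Real.sqrt 2)⁻¹ * y (.inr (w, true))⟩)
  map_add' x y := by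
    ext q
    rcases q with v | ⟨w, b⟩
    · show sK K * (x.1 v + y.1 v) = sK K * x.1 v + sK K * y.1 v
      ring
    · show (sK K * Real.sqrt 2) * (if b then (x.2 w + y.2 w).im else (x.2 w + y.2 w).re) = _
      cases b <;> simp [Complex.add_re, Complex.add_im] <;> ring
  map_smul' c x := by
    ext q
    rcases q with v | ⟨w, b⟩
    · show sK K * (c * x.1 v) = c * (sK K * x.1 v)
      ring
    · show (sK K * Real.sqrt 2) * (if b then (c • x.2 w).im else (c • x.2 w).re) = _
      cases b <;> simp [Complex.smul_re, Complex.smul_im] <;> ring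
  left_inv x := by
    have h1 : sK K ≠ 0 := ne_of_gt (sK_pos K)
    have h2 : sK K * Real.sqrt 2 ≠ 0 := by
      have h3 : (0:ℝ) < Real.sqrt 2 := Real.sqrt_pos.mpr (by norm_num)
      positivity
    refine Prod.ext (funext fun v => ?_) (funext fun w => ?_)
    · show (sK K)⁻¹ * (sK K * x.1 v) = x.1 v
      field_simp
    · show (⟨(sK K * Real.sqrt 2)⁻¹ * ((sK K * Real.sqrt 2) * (x.2 w).re),
            (sK K * Real.sqrt 2)⁻¹ * ((sK K * Real.sqrt 2) * (x.2 w).im)⟩ : ℂ) = x.2 w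
      apply Complex.ext <;> field_simp
  right_inv y := by
    have h1 : sK K ≠ 0 := ne_of_gt (sK_pos K)
    have h2 : sK K * Real.sqrt 2 ≠ 0 := by
      have h3 : (0:ℝ) < Real.sqrt 2 := Real.sqrt_pos.mpr (by norm_num)
      positivity
    ext q
    rcases q with v | ⟨w, b⟩
    · show sK K * ((sK K)⁻¹ * y (.inl v)) = y (.inl v)
      field_simp
    · cases b
      · show (sK K * Real.sqrt 2) * ((sK K * Real.sqrt 2)⁻¹ * y (.inr (w, false))) = _
        field_simp
      · show (sK K * Real.sqrt 2) * ((sK K * Real.sqrt 2)⁻¹ * y (.inr (w, true))) = _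
        field_simp

/-- Euclidean coordinates for vectors in `K_ℝ^m`. -/
def eucVec (m : ℕ) : (Fin m → MS K) ≃ₗ[ℝ] EuclideanSpace ℝ (Fin m × RIx K) where
  toFun x := WithLp.toLp 2 fun (p : Fin m × RIx K) => eucMap K (x p.1) p.2
  invFun y := fun i => (eucMap K).symm (WithLp.toLp 2 fun q => y (i, q))
  map_add' x y := by
    ext p
    show eucMap K (x p.1 + y p.1) p.2 = eucMap K (x p.1) p.2 + eucMap K (y p.1) p.2
    rw [map_add]; rfl
  map_smul' c x := by
    ext p
    show eucMap K (c • x p.1) p.2 = c * eucMap K (x p.1) p.2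
    rw [_root_.map_smul]; rfl
  left_inv x := by
    funext i
    show (eucMap K).symm (WithLp.toLp 2 fun q => eucMap K (x i) q) = x i
    exact (eucMap K).symm_apply_apply (x i)
  right_inv y := by
    ext p
    show eucMap K ((eucMap K).symm (WithLp.toLp 2 fun q => y (p.1, q))) p.2 = y p
    rw [(eucMap K).apply_symm_apply] <;> rfl

/-- Euclidean coordinates for matrices in `M_{n×m}(K_ℝ)`. -/
def eucMat (n m : ℕ) :
    Matrix (Fin n) (Fin m) (MS K) ≃ₗ[ℝ] EuclideanSpace ℝ (Fin n × Fin m × RIx K) where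
  toFun A := WithLp.toLp 2 fun (p : Fin n × Fin m × RIx K) => eucMap K (A p.1 p.2.1) p.2.2
  invFun y := Matrix.of fun i j => (eucMap K).symm (WithLp.toLp 2 fun q => y (i, j, q))
  map_add' x y := by
    ext p
    show eucMap K (x p.1 p.2.1 + y p.1 p.2.1) p.2.2 = _
    rw [map_add]; rfl
  map_smul' c x := by
    ext p
    show eucMap K (c • x p.1 p.2.1) p.2.2 = c * eucMap K (x p.1 p.2.1) p.2.2
    rw [_root_.map_smul]; rfl
  left_inv x := by
    funext i j
    show (eucMap K).symm (WithLp.toLp 2 fun q => eucMap K (x i j) q) = x i j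
    exact (eucMap K).symm_apply_apply (x i j)
  right_inv y := by
    ext p
    show eucMap K ((eucMap K).symm (WithLp.toLp 2 fun q => y (p.1, p.2.1, q))) p.2.2 = y p
    rw [(eucMap K).apply_symm_apply] <;> rfl

/-- The Euclidean norm on `K_ℝ^m` (the `l²`-norm from `‖x‖² = |Δ_K|^{-2/d}·Tr(x·x̄)`,
extended coordinatewise). -/
def vnorm {m : ℕ} (x : Fin m → MS K) : ℝ := ‖eucVec K m x‖

/-- The Euclidean norm on `M_{n×m}(K_ℝ)`. -/
def mnorm {n m : ℕ} (A : Matrix (Fin n) (Fin m) (MS K)) : ℝ := ‖eucMat K n m A‖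

/-- The embedding of `M_{n×m}(O_K)` into `M_{n×m}(K_ℝ)`. -/
def embMat {n m : ℕ} (A : Matrix (Fin n) (Fin m) (𝓞 K)) : Matrix (Fin n) (Fin m) (MS K) :=
  A.map (fun a => NumberField.mixedEmbedding K (algebraMap (𝓞 K) K a))

/-- The rank (over `K`) of a matrix with entries in `O_K`. -/
def rankOK {n m : ℕ} (A : Matrix (Fin n) (Fin m) (𝓞 K)) : ℕ :=
  (A.map (algebraMap (𝓞 K) K)).rank

end Paper

/-! Generic notions for Euclidean spaces: oscillation, admissible functions, integration over
subspaces (with respect to the induced Lebesgue measure), covering radius and height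
(covolume) of lattices. -/

namespace Paper

/-- The oscillation function `E_f(x, ε) = sup_{‖x−y‖ ≤ ε} |f(x)−f(y)|`. -/
def Ef {V : Type} [NormedAddCommGroup V] (f : V → ℝ) (x : V) (ε : ℝ) : ℝ :=
  ⨆ y : {y : V // ‖x - y‖ ≤ ε}, |f x - f (y : V)|

/-- Integral of `g` over the subspace `W ⊆ V` with respect to the Lebesgue measure induced
on `W` by the inner product of `V` (computed in an orthonormal coordinate system of `W`). -/
def subInt {V : Type} [NormedAddCommGroup V] [InnerProductSpace ℝ V] [FiniteDimensional ℝ V]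
    (W : Submodule ℝ V) (g : V → ℝ) : ℝ :=
  ∫ y : EuclideanSpace ℝ (Fin (Module.finrank ℝ W)),
    g (((stdOrthonormalBasis ℝ W).repr.symm y : W) : V)

/-- A function on a Euclidean space is admissible with constant `Cf` if it is compactly
supported, measurable, and for every `ε > 0` and every nonzero real subspace `W`, the
integral of its oscillation `E_f(·, ε)` over `W` is at most `Cf·ε`. -/
def IsAdmissible {V : Type} [NormedAddCommGroup V] [InnerProductSpace ℝ V]
    [FiniteDimensional ℝ V] [MeasurableSpace V] [BorelSpace V] (f : V → ℝ) (Cf : ℝ) : Prop :=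
  HasCompactSupport f ∧ Measurable f ∧ 0 < Cf ∧
    ∀ ε : ℝ, 0 < ε → ∀ W : Submodule ℝ V, W ≠ ⊥ →
      subInt W (fun x => Ef f x ε) ≤ Cf * ε

/-- The covering radius of a subset `S` of a normed space:
`ρ(S) = sup_{x ∈ span ℝ S} inf_{v ∈ S} ‖x−v‖`. -/
def covRadV {V : Type} [NormedAddCommGroup V] [Module ℝ V] (S : Set V) : ℝ :=
  ⨆ x : Submodule.span ℝ S, ⨅ v : S, ‖(x : V) - (v : V)‖

/-- The height `H(L) = vol((L⊗ℝ)/L)` of a `ℤ`-submodule `L` of a Euclidean space, computed as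
the covolume of the image of `L` in an orthonormal coordinate system of `span ℝ L`. -/
def hgtV {V : Type} [NormedAddCommGroup V] [InnerProductSpace ℝ V] [FiniteDimensional ℝ V]
    (L : Submodule ℤ V) : ℝ :=
  ZLattice.covolume
    ((L.comap (((Submodule.span ℝ (L : Set V)).subtype).restrictScalars ℤ)).map
      (((stdOrthonormalBasis ℝ (Submodule.span ℝ (L : Set V))).repr.toLinearEquiv.restrictScalars
        ℤ).toLinearMap)) MeasureTheory.volume

end Paper

/-! `O_K`-module lattices in `K_ℝ^m` and their successive `K`-minima. -/

namespace Paper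

variable (K : Type) [Field K] [NumberField K]

/-- The action of an algebraic integer on a vector of `K_ℝ^m` (coordinatewise
multiplication through the mixed embedding). -/
def okSmul {m : ℕ} (a : NumberField.RingOfIntegers K) (x : Fin m → MS K) : Fin m → MS K :=
  fun t => NumberField.mixedEmbedding K (algebraMap (NumberField.RingOfIntegers K) K a) * x t

/-- An `O_K`-module lattice in `K_ℝ^m`: a discrete additive subgroup stable under the
`O_K`-action. -/
def IsOKModuleLattice {m : ℕ} (Λ : Set (Fin m → MS K)) : Prop :=
  (0 : Fin m → MS K) ∈ Λ ∧ (∀ x ∈ Λ, ∀ y ∈ Λ, x + y ∈ Λ) ∧ (∀ x ∈ Λ, -x ∈ Λ) ∧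
  (∀ a : NumberField.RingOfIntegers K, ∀ x ∈ Λ, okSmul K a x ∈ Λ) ∧
  (∃ ε : ℝ, 0 < ε ∧ ∀ x ∈ Λ, vnorm K x < ε → x = 0)

/-- The subset `K·l₁ + ⋯ + K·l_i ⊆ K_ℝ^m` (`K`-span of the first `i` vectors). -/
def KSpanUpTo {m k : ℕ} (l : Fin k → (Fin m → MS K)) (i : ℕ) : Set (Fin m → MS K) :=
  {x | ∃ c : Fin k → K, x = fun t =>
    ∑ j ∈ Finset.univ.filter (fun j : Fin k => (j : ℕ) < i),
      NumberField.mixedEmbedding K (c j) * l j t}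

/-- `l₁, …, l_k` is a system of successive `K`-minima of `Λ`: each `l_i` belongs to `Λ`,
lies outside `K·l₁ + ⋯ + K·l_{i-1}`, and has minimal norm among such lattice vectors. -/
def IsSuccKMinima {m k : ℕ} (Λ : Set (Fin m → MS K)) (l : Fin k → (Fin m → MS K)) : Prop :=
  ∀ i : Fin k, l i ∈ Λ ∧ l i ∉ KSpanUpTo K l (i : ℕ) ∧
    ∀ v ∈ Λ, v ∉ KSpanUpTo K l (i : ℕ) → vnorm K (l i) ≤ vnorm K v

/-- The real subspace `K_ℝ·v` of the Euclidean model of `K_ℝ^m`. -/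
def lineR {m : ℕ} (v : Fin m → MS K) : Submodule ℝ (EuclideanSpace ℝ (Fin m × RIx K)) :=
  Submodule.span ℝ ((eucVec K m) '' {x | ∃ a : MS K, x = fun t => a * v t})

end Paper

/-! If `ω_1, …, ω_d` is a `ℤ`-basis of `O_K`, the `k·d` vectors `ω_j l_i` lie in `Λ`, and they are
`ℤ`-independent because the `l_i` are `K`-independent. In the discrete group `Λ` this makes them
`ℝ`-independent, so they span `Λ ⊗ ℝ`, whose dimension is `k·d`. Rounding the coordinates of a
point of `Λ ⊗ ℝ` in this family moves it by at most `½ ∑ ‖ω_j l_i‖ ≤ ½ k (∑_j ‖ω_j‖_op) ‖l_k‖`,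
where `‖ω_j‖_op` is the operator norm of multiplication by `ω_j`. -/

open Paper NumberField

section Lattices

variable {E : Type} [NormedAddCommGroup E] [NormedSpace ℝ E]

theorem covRadV_le_sum_norm_div_two (L : Submodule ℤ E) {ι : Type*} [Fintype ι] {v : ι → E}
    (hvL : ∀ t, v t ∈ L) (hspan : span ℝ (L : Set E) ≤ span ℝ (Set.range v)) :
    covRadV (L : Set E) ≤ ∑ t, ‖v t‖ / 2 := by
  refine Real.iSup_le (fun x => ?_) (by positivity)
  obtain ⟨c, hc⟩ := (mem_span_range_iff_exists_fun ℝ).mp (hspan x.2)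
  have hround : ∑ t, round (c t) • v t ∈ L := sum_mem fun t _ => L.smul_mem _ (hvL t)
  refine ciInf_le_of_le ⟨0, by rintro _ ⟨_, rfl⟩; positivity⟩ ⟨_, hround⟩ ?_
  calc ‖(x : E) - ∑ t, round (c t) • v t‖ = ‖∑ t, (c t - round (c t)) • v t‖ := by
        simp only [← hc, sub_smul, Finset.sum_sub_distrib, Int.cast_smul_eq_zsmul]
    _ ≤ ∑ t, ‖(c t - round (c t)) • v t‖ := norm_sum_le _ _
    _ ≤ ∑ t, ‖v t‖ / 2 := Finset.sum_le_sum fun t _ => by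
        rw [norm_smul, Real.norm_eq_abs, div_eq_inv_mul, ← one_div]
        exact mul_le_mul_of_nonneg_right (abs_sub_round _) (norm_nonneg _)

/-- In a discrete subgroup `ℤ`-independent vectors are `ℝ`-independent
(`Real.finrank_eq_int_finrank_of_discrete`), so enough of them span the whole lattice. -/
theorem span_eq_span_range_of_linearIndependent [FiniteDimensional ℝ E] (L : Submodule ℤ E)
    [DiscreteTopology L] {ι : Type*} [Fintype ι] {v : ι → E} (hvL : ∀ t, v t ∈ L)
    (hv : LinearIndependent ℤ v) (hcard : finrank ℝ (span ℝ (L : Set E)) ≤ Fintype.card ι) :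
    span ℝ (Set.range v) = span ℝ (L : Set E) := by
  have hle : span ℤ (Set.range v) ≤ L := span_le.mpr (Set.range_subset_iff.mpr hvL)
  have : DiscreteTopology (span ℤ (Set.range v)) := DiscreteTopology.of_subset ‹_› hle
  have hrank : finrank ℝ (span ℝ (Set.range v)) = Fintype.card ι := by
    rw [← Set.finrank, Real.finrank_eq_int_finrank_of_discrete this, Set.finrank,
      finrank_span_eq_card hv]
  exact eq_of_le_of_finrank_le
    (span_le.mpr (Set.range_subset_iff.mpr fun t => subset_span (hvL t))) (hcard.trans hrank.ge)

end Lattices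

namespace Paper

variable {K : Type} [Field K] {m k : ℕ}

theorem exists_vnorm_okSmul_le [NumberField K] (a : 𝓞 K) :
    ∃ c, 0 ≤ c ∧ ∀ x : Fin m → MS K, vnorm K (okSmul K a x) ≤ c * vnorm K x := by
  let f : (Fin m → MS K) →ₗ[ℝ] (Fin m → MS K) :=
    { toFun := okSmul K a
      map_add' := fun x y => funext fun t => mul_add _ _ _
      map_smul' := fun r x => funext fun t => mul_smul_comm r _ _ }
  let g := ((eucVec K m).toLinearMap ∘ₗ f ∘ₗ (eucVec K m).symm.toLinearMap).toContinuousLinearMap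
  refine ⟨‖g‖, norm_nonneg _, fun x => ?_⟩
  simpa [g, f, vnorm] using g.le_opNorm (eucVec K m x)

theorem kSpanUpTo_mono (l : Fin k → Fin m → MS K) {i i' : ℕ} (h : i ≤ i') :
    KSpanUpTo K l i ⊆ KSpanUpTo K l i' := by
  rintro x ⟨c, rfl⟩
  refine ⟨fun j => if (j : ℕ) < i then c j else 0, funext fun t => ?_⟩
  simp only [Finset.sum_filter]
  refine Finset.sum_congr rfl fun j _ => ?_
  by_cases hj : (j : ℕ) < i
  · simp [hj, hj.trans_le h]
  · simp [hj]

theorem IsSuccKMinima.monotone_vnorm [NumberField K] {Λ : Set (Fin m → MS K)}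
    {l : Fin k → Fin m → MS K} (hl : IsSuccKMinima K Λ l) : Monotone fun i => vnorm K (l i) :=
  fun i j hij => (hl i).2.2 _ (hl j).1 fun h => (hl j).2.1 (kSpanUpTo_mono l hij h)

theorem mem_kSpanUpTo_of_sum_eq_zero {l : Fin k → Fin m → MS K} {c : Fin k → K} {r : Fin k}
    (hrel : ∀ t, ∑ i, mixedEmbedding K (c i) * l i t = 0) (hr : c r ≠ 0)
    (hc : ∀ i, r < i → c i = 0) : l r ∈ KSpanUpTo K l r := by
  refine ⟨fun i => -((c r)⁻¹ * c i), funext fun t => ?_⟩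
  set P := Finset.univ.filter fun i : Fin k => (i : ℕ) < r
  have hsplit : mixedEmbedding K (c r) * l r t + ∑ i ∈ P, mixedEmbedding K (c i) * l i t = 0 := by
    rw [← hrel t, ← Finset.sum_filter_add_sum_filter_not Finset.univ
      (fun i : Fin k => (i : ℕ) < r), add_comm (mixedEmbedding K (c r) * l r t)]
    refine congrArg _ (Finset.sum_eq_single_of_mem (f := fun i => mixedEmbedding K (c i) * l i t) r
      (Finset.mem_filter.mpr ⟨Finset.mem_univ _, lt_irrefl _⟩) fun i hi hir => ?_).symm
    have hri : r < i := lt_of_le_of_ne (by simpa using hi) (Ne.symm hir)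
    simp [hc i hri]
  have hunit : mixedEmbedding K (c r)⁻¹ * mixedEmbedding K (c r) = 1 := by
    rw [← map_mul, inv_mul_cancel₀ hr, map_one]
  calc l r t = mixedEmbedding K (c r)⁻¹ * (mixedEmbedding K (c r) * l r t) := by
        rw [← mul_assoc, hunit, one_mul]
    _ = ∑ i ∈ P, mixedEmbedding K (-((c r)⁻¹ * c i)) * l i t := by
        rw [eq_neg_of_add_eq_zero_left hsplit, mul_neg, Finset.mul_sum, ← Finset.sum_neg_distrib]
        refine Finset.sum_congr rfl fun i _ => ?_
        rw [map_neg, map_mul]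
        ring

theorem eq_zero_of_sum_okSmul_eq_zero {l : Fin k → Fin m → MS K}
    (hl : ∀ i : Fin k, l i ∉ KSpanUpTo K l i) {c : Fin k → 𝓞 K}
    (h : ∑ i, okSmul K (c i) (l i) = 0) : c = 0 := by
  by_contra hne
  obtain ⟨r, hr, hmax⟩ := (Finset.univ.filter fun i => c i ≠ 0).exists_max_image id
    (by simpa [Finset.filter_nonempty_iff, funext_iff] using hne)
  refine hl r (mem_kSpanUpTo_of_sum_eq_zero (c := fun i => (c i : K)) (fun t => ?_) ?_ ?_)
  · simpa [okSmul] using congrFun h t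
  · simpa using hr
  · intro i hri
    by_contra hi
    exact (hmax i (by simpa using hi)).not_gt hri

theorem linearIndependent_okSmul {ι : Type*} [Fintype ι] (ω : Basis ι ℤ (𝓞 K))
    {l : Fin k → Fin m → MS K} (hl : ∀ i : Fin k, l i ∉ KSpanUpTo K l i) :
    LinearIndependent ℤ fun p : Fin k × ι => okSmul K (ω p.2) (l p.1) := by
  rw [Fintype.linearIndependent_iff]
  intro g hg p
  have hc : (fun i => ∑ j, g (i, j) • ω j) = 0 := by
    refine eq_zero_of_sum_okSmul_eq_zero hl ?_
    rw [← hg, Fintype.sum_prod_type]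
    refine Finset.sum_congr rfl fun i _ => funext fun t => ?_
    simp [okSmul, Finset.sum_mul, mul_assoc]
  exact Fintype.linearIndependent_iff.mp ω.linearIndependent _ (congrFun hc p.1) p.2

end Paper

namespace Paper.IsOKModuleLattice

variable {K : Type} [Field K] [NumberField K] {m : ℕ} {Λ : Set (Fin m → MS K)}

def eucLattice (hΛ : IsOKModuleLattice K Λ) : Submodule ℤ (EuclideanSpace ℝ (Fin m × RIx K)) :=
  (AddSubgroup.map (eucVec K m).toLinearMap.toAddMonoidHom
    { carrier := Λ
      add_mem' := fun ha hb => hΛ.2.1 _ ha _ hb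
      zero_mem' := hΛ.1
      neg_mem' := fun ha => hΛ.2.2.1 _ ha }).toIntSubmodule

theorem coe_eucLattice (hΛ : IsOKModuleLattice K Λ) :
    (hΛ.eucLattice : Set (EuclideanSpace ℝ (Fin m × RIx K))) = eucVec K m '' Λ :=
  rfl

theorem discreteTopology_eucLattice (hΛ : IsOKModuleLattice K Λ) :
    DiscreteTopology hΛ.eucLattice := by
  obtain ⟨ε, hε, hsep⟩ := hΛ.2.2.2.2
  refine discreteTopology_of_isOpen_singleton_zero (Metric.isOpen_singleton_iff.mpr ⟨ε, hε, ?_⟩)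
  rintro ⟨_, x, hx, rfl⟩ hxε
  have hx0 : x = 0 := hsep x hx (by simpa [vnorm] using hxε)
  simp [hx0]

theorem eucVec_okSmul_mem (hΛ : IsOKModuleLattice K Λ) (a : 𝓞 K) {x : Fin m → MS K}
    (hx : x ∈ Λ) : eucVec K m (okSmul K a x) ∈ hΛ.eucLattice :=
  ⟨_, hΛ.2.2.2.1 a x hx, rfl⟩

theorem finrank_span_eucLattice (hΛ : IsOKModuleLattice K Λ) :
    finrank ℝ (span ℝ (hΛ.eucLattice : Set (EuclideanSpace ℝ (Fin m × RIx K)))) =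
      finrank ℝ (span ℝ Λ) := by
  rw [coe_eucLattice, ← LinearEquiv.coe_coe, ← map_span, LinearEquiv.finrank_map_eq]

end Paper.IsOKModuleLattice

theorem covering_radius_le_last_minimum (K : Type) [Field K] [NumberField K]
    (m k : ℕ) (hk : 1 ≤ k) :
    ∃ C : ℝ, 0 < C ∧
      ∀ Λ : Set (Fin m → MS K), IsOKModuleLattice K Λ →
        -- `Λ` has `O_K`-rank `k`
        Module.finrank ℝ (Submodule.span ℝ Λ) = k * Module.finrank ℚ K →
        ∀ l : Fin k → (Fin m → MS K), IsSuccKMinima K Λ l →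
          covRadV ((eucVec K m) '' Λ) ≤ C * vnorm K (l ⟨k - 1, by omega⟩) := by
  choose c hc0 hc using exists_vnorm_okSmul_le (K := K) (m := m)
  let ω := Module.Free.chooseBasis ℤ (𝓞 K)
  let B := ∑ j, c (ω j)
  have hB : 0 ≤ B := Finset.sum_nonneg fun j _ => hc0 _
  refine ⟨k * B / 2 + 1, by positivity, fun Λ hΛ hrank l hl => ?_⟩
  set N := vnorm K (l ⟨k - 1, by omega⟩)
  let w := fun p : Fin k × _ => eucVec K m (okSmul K (ω p.2) (l p.1))
  have hwL : ∀ p, w p ∈ hΛ.eucLattice := fun p => hΛ.eucVec_okSmul_mem _ (hl p.1).1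
  have hw : ∀ p, ‖w p‖ ≤ c (ω p.2) * N := fun p => (hc _ _).trans <|
    mul_le_mul_of_nonneg_left (hl.monotone_vnorm (Fin.mk_le_mk.mpr (by omega))) (hc0 _)
  have := hΛ.discreteTopology_eucLattice
  have hspan := span_eq_span_range_of_linearIndependent _ hwL
    ((linearIndependent_okSmul ω fun i => (hl i).2.1).map'
      ((eucVec K m).restrictScalars ℤ).toLinearMap (LinearEquiv.ker _))
    (by rw [hΛ.finrank_span_eucLattice, hrank, Fintype.card_prod, Fintype.card_fin,
      ← finrank_eq_card_chooseBasisIndex, RingOfIntegers.rank])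
  calc covRadV (eucVec K m '' Λ) ≤ ∑ p, ‖w p‖ / 2 :=
        covRadV_le_sum_norm_div_two hΛ.eucLattice hwL hspan.ge
    _ ≤ ∑ p : Fin k × _, c (ω p.2) * N / 2 := by gcongr with p; exact hw p
    _ = k * B / 2 * N := by
        simp only [Fintype.sum_prod_type, Finset.sum_const, Finset.card_univ, Fintype.card_fin,
          nsmul_eq_mul, ← Finset.sum_div, ← Finset.sum_mul, B]
        ring
    _ ≤ (k * B / 2 + 1) * N := mul_le_mul_of_nonneg_right (by linarith) (norm_nonneg _)
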